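/- Let f: [0,∞) → [0,∞) be continuous and satisfy f(t) ≤ f(0)·exp(−(C/2)∫₀ᵗ (1 + ∫₀^τ f(s)ds)^{-1} dτ) for all t ≥ 0, where C > 0. Then ∫₀^∞ f(s) ds < ∞, and moreover there exist constants A, c > 0 such that f(t) ≤ A e^{-ct} for all t ≥ 0. -/

import Mathlib

/-! Write `F t = ∫₀ᵗ f` and `G t = ∫₀ᵗ (1 + F)⁻¹`. The hypothesis says `F' ≤ f(0) e^{-(C/2) G}`,
so `Φ = log (1 + F) + (2 f(0)/C) e^{-(C/2) G}` has `Φ' = (F' - f(0) e^{-(C/2) G}) / (1 + F) ≤ 0`.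
Hence `log (1 + F) ≤ Φ(0) = 2 f(0)/C`, i.e. `1 + F ≤ B := e^{2 f(0)/C}`. Then `G t ≥ t / B`, and
the hypothesis gives `f t ≤ f(0) e^{-C t / (2B)}`, which is integrable. -/

open MeasureTheory intervalIntegral Set Real

lemma continuousOn_primitive_Ici {f : ℝ → ℝ} {a : ℝ} (hf : ContinuousOn f (Ici a)) :
    ContinuousOn (fun x => ∫ t in a..x, f t) (Ici a) := by
  intro x hx
  have hIcc : uIcc a (x + 1) = Icc a (x + 1) := uIcc_of_le (by linarith [hx.out])
  have hprim := continuousOn_primitive_interval' (μ := volume)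
    (hf.mono (hIcc ▸ Icc_subset_Ici_self)).intervalIntegrable (left_mem_uIcc (b := x + 1))
  refine (hprim x (hIcc ▸ ⟨hx, by linarith⟩)).mono_of_mem_nhdsWithin ?_
  rw [hIcc, ← Ici_inter_Iic]
  exact inter_mem_nhdsWithin _ (Iic_mem_nhds (by linarith))

lemma hasDerivAt_primitive_of_continuousOn_Ici {f : ℝ → ℝ} {a t : ℝ}
    (hf : ContinuousOn f (Ici a)) (ht : a < t) :
    HasDerivAt (fun x => ∫ s in a..x, f s) (f t) t :=
  integral_hasDerivAt_right
    (hf.mono (uIcc_of_le ht.le ▸ Icc_subset_Ici_self)).intervalIntegrable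
    ((hf.mono Ioi_subset_Ici_self).stronglyMeasurableAtFilter isOpen_Ioi t ht)
    (hf.continuousAt (Ici_mem_nhds ht))

theorem antitoneOn_log_one_add_add_mul_exp {D : Set ℝ} (hD : Convex ℝ D) {F G f : ℝ → ℝ}
    {K κ : ℝ} (hκ : κ ≠ 0) (hF : ContinuousOn F D) (hG : ContinuousOn G D)
    (hF' : ∀ t ∈ interior D, HasDerivAt F (f t) t)
    (hG' : ∀ t ∈ interior D, HasDerivAt G (1 + F t)⁻¹ t)
    (hpos : ∀ t ∈ D, 0 < 1 + F t)
    (hf : ∀ t ∈ interior D, f t ≤ K * exp (-κ * G t)) :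
    AntitoneOn (fun t => log (1 + F t) + K / κ * exp (-κ * G t)) D := by
  have hderiv : ∀ t ∈ interior D,
      HasDerivAt (fun t => log (1 + F t) + K / κ * exp (-κ * G t))
        ((f t - K * exp (-κ * G t)) * (1 + F t)⁻¹) t := by
    intro t ht
    have hFt := hpos t (interior_subset ht)
    refine ((((hF' t ht).const_add 1).log hFt.ne').add
      ((((hG' t ht).const_mul (-κ)).exp).const_mul (K / κ))).congr_deriv ?_
    field_simp
    ring
  apply antitoneOn_of_deriv_nonpos hD
  · exact ((continuousOn_const.add hF).log fun t ht => (hpos t ht).ne').add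
      (continuousOn_const.mul (continuous_exp.comp_continuousOn (continuousOn_const.mul hG)))
  · exact fun t ht => (hderiv t ht).differentiableAt.differentiableWithinAt
  · intro t ht
    rw [(hderiv t ht).deriv]
    exact mul_nonpos_of_nonpos_of_nonneg (sub_nonpos.2 (hf t ht))
      (inv_pos.2 (hpos t (interior_subset ht))).le

lemma one_add_integral_pos {f : ℝ → ℝ} (hnn : ∀ t : ℝ, 0 ≤ t → 0 ≤ f t) {t : ℝ} (ht : 0 ≤ t) :
    0 < 1 + ∫ s in (0:ℝ)..t, f s := by
  have := integral_nonneg (μ := volume) ht fun s hs => hnn s hs.1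
  linarith

lemma continuousOn_inv_one_add_integral {f : ℝ → ℝ} (hcont : ContinuousOn f (Ici 0))
    (hnn : ∀ t : ℝ, 0 ≤ t → 0 ≤ f t) :
    ContinuousOn (fun τ => (1 + ∫ s in (0:ℝ)..τ, f s)⁻¹) (Ici 0) :=
  (continuousOn_const.add (continuousOn_primitive_Ici hcont)).inv₀
    fun _ hτ => (one_add_integral_pos hnn hτ).ne'

lemma sub_div_le_integral_inv {u : ℝ → ℝ} {a b B : ℝ} (hab : a ≤ b)
    (hu : IntervalIntegrable (fun x => (u x)⁻¹) volume a b)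
    (hpos : ∀ x ∈ Icc a b, 0 < u x) (hle : ∀ x ∈ Icc a b, u x ≤ B) :
    (b - a) / B ≤ ∫ x in a..b, (u x)⁻¹ :=
  calc (b - a) / B = ∫ _ in a..b, B⁻¹ := by simp [div_eq_mul_inv]
    _ ≤ _ := integral_mono_on hab intervalIntegrable_const hu
      fun x hx => inv_anti₀ (hpos x hx) (hle x hx)

theorem one_add_integral_le_exp_of_integral_inequality {f : ℝ → ℝ} {C : ℝ} (hC : 0 < C)
    (hcont : ContinuousOn f (Ici 0)) (hnn : ∀ t : ℝ, 0 ≤ t → 0 ≤ f t)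
    (hineq : ∀ t : ℝ, 0 ≤ t →
      f t ≤ f 0 * exp (-(C/2) * ∫ τ in (0:ℝ)..t, (1 + ∫ s in (0:ℝ)..τ, f s)⁻¹))
    (t : ℝ) (ht : 0 ≤ t) :
    1 + ∫ s in (0:ℝ)..t, f s ≤ exp (f 0 / (C / 2)) := by
  have hanti := antitoneOn_log_one_add_add_mul_exp (convex_Ici 0) (K := f 0)
    (by positivity : C / 2 ≠ 0) (continuousOn_primitive_Ici hcont)
    (continuousOn_primitive_Ici (continuousOn_inv_one_add_integral hcont hnn))
    (fun τ hτ => hasDerivAt_primitive_of_continuousOn_Ici hcont (by simpa using hτ))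
    (fun τ hτ => hasDerivAt_primitive_of_continuousOn_Ici
      (continuousOn_inv_one_add_integral hcont hnn) (by simpa using hτ))
    (fun τ hτ => one_add_integral_pos hnn hτ)
    (fun τ hτ => hineq τ (interior_subset hτ))
  have hΦ := hanti self_mem_Ici ht ht
  simp only [integral_same, add_zero, log_one, mul_zero, exp_zero, mul_one, zero_add] at hΦ
  have hexp : 0 ≤ f 0 / (C / 2) * exp (-(C / 2) * ∫ τ in (0:ℝ)..t,
      (1 + ∫ s in (0:ℝ)..τ, f s)⁻¹) := by
    have := hnn 0 le_rfl
    positivity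
  rw [← log_le_iff_le_exp (one_add_integral_pos hnn ht)]
  linarith

theorem le_mul_exp_neg_of_integral_inequality {f : ℝ → ℝ} {C : ℝ} (hC : 0 < C)
    (hcont : ContinuousOn f (Ici 0)) (hnn : ∀ t : ℝ, 0 ≤ t → 0 ≤ f t)
    (hineq : ∀ t : ℝ, 0 ≤ t →
      f t ≤ f 0 * exp (-(C/2) * ∫ τ in (0:ℝ)..t, (1 + ∫ s in (0:ℝ)..τ, f s)⁻¹))
    (t : ℝ) (ht : 0 ≤ t) :
    f t ≤ f 0 * exp (-(C / 2 / exp (f 0 / (C / 2))) * t) := by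
  have hG : t / exp (f 0 / (C / 2)) ≤ ∫ τ in (0:ℝ)..t, (1 + ∫ s in (0:ℝ)..τ, f s)⁻¹ := by
    simpa using sub_div_le_integral_inv ht
      ((continuousOn_inv_one_add_integral hcont hnn).mono
        (uIcc_of_le ht ▸ Icc_subset_Ici_self)).intervalIntegrable
      (fun x hx => one_add_integral_pos hnn hx.1)
      (fun x hx => one_add_integral_le_exp_of_integral_inequality hC hcont hnn hineq x hx.1)
  have hf0 := hnn 0 le_rfl
  calc f t ≤ f 0 * exp (-(C/2) * ∫ τ in (0:ℝ)..t, (1 + ∫ s in (0:ℝ)..τ, f s)⁻¹) := hineq t ht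
    _ ≤ f 0 * exp (-(C / 2) * (t / exp (f 0 / (C / 2)))) :=
      mul_le_mul_of_nonneg_left (exp_le_exp.2 (mul_le_mul_of_nonpos_left hG (by linarith))) hf0
    _ = f 0 * exp (-(C / 2 / exp (f 0 / (C / 2))) * t) := by ring_nf

lemma integrableOn_Ici_of_le_mul_exp_neg {f : ℝ → ℝ} {a A c : ℝ} (hc : 0 < c)
    (hf : AEStronglyMeasurable f (volume.restrict (Ici a))) (hnn : ∀ t, a ≤ t → 0 ≤ f t)
    (hle : ∀ t, a ≤ t → f t ≤ A * exp (-c * t)) :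
    IntegrableOn f (Ici a) := by
  have hexp : IntegrableOn (fun t => A * exp (-c * t)) (Ici a) := by
    rw [integrableOn_Ici_iff_integrableOn_Ioi]
    exact (exp_neg_integrableOn_Ioi a hc).const_mul A
  refine hexp.mono' hf ?_
  filter_upwards [ae_restrict_mem measurableSet_Ici] with t ht
  rw [Real.norm_of_nonneg (hnn t ht)]
  exact hle t ht

theorem integral_inequality_exponential_decay
    (f : ℝ → ℝ) (C : ℝ) (hC : 0 < C)
    (hcont : ContinuousOn f (Set.Ici 0))
    (hnn : ∀ t : ℝ, 0 ≤ t → 0 ≤ f t)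
    (hineq : ∀ t : ℝ, 0 ≤ t →
      f t ≤ f 0 * Real.exp (-(C/2) *
        ∫ τ in (0:ℝ)..t, (1 + ∫ s in (0:ℝ)..τ, f s)⁻¹)) :
    IntegrableOn f (Set.Ici 0) ∧
    ∃ A c : ℝ, 0 < A ∧ 0 < c ∧ ∀ t : ℝ, 0 ≤ t → f t ≤ A * Real.exp (-c * t) := by
  have hc : 0 < C / 2 / exp (f 0 / (C / 2)) := by positivity
  have hdecay := le_mul_exp_neg_of_integral_inequality hC hcont hnn hineq
  have hf0 := hnn 0 le_rfl
  refine ⟨integrableOn_Ici_of_le_mul_exp_neg hc (hcont.aestronglyMeasurable measurableSet_Ici)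
    hnn hdecay, f 0 + 1, _, by linarith, hc, fun t ht => (hdecay t ht).trans ?_⟩
  gcongr
  linarith
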